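/- arXiv:2507.06198 — 2 statements merged into one kernel-verified Lean document; each statement's English description precedes it below -/
import Mathlib

section
/- For every natural number n and every real x, the integral over the real line of e^{-y^2/2}·He_n(x + y) dy equals √(2π)·x^n. -/
open Nat MeasureTheory

noncomputable def He (n : ℕ) (x : ℝ) : ℝ := Polynomial.aeval x (Polynomial.hermite n)

/-!
Gaussian integration by parts gives `∫ e^{-y²/2} (y P(y) - P'(y)) dy = 0` for every real
polynomial `P`. Substituting `z = x + y` in the recurrence `He_{n+1}(z) = z He_n(z) - He_n'(z)`
writes `He_{n+1}(x + y)` as `x He_n(x + y)` plus such a term, so the Gaussian average of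
`He_n(x + ·)` gets multiplied by `x` at each step, starting from `∫ e^{-y²/2} dy = √(2π)`.
-/

open Polynomial Real

lemma integrable_exp_neg_sq_div_two_mul_eval (P : ℝ[X]) :
    Integrable fun y : ℝ => exp (-y ^ 2 / 2) * P.eval y := by
  induction P using Polynomial.induction_on' with
  | add p q hp hq => simpa only [eval_add, mul_add, Pi.add_def] using hp.add hq
  | monomial k a =>
    have hk : Integrable fun y : ℝ => y ^ (k : ℝ) * exp (-(1 / 2) * y ^ 2) :=
      integrable_rpow_mul_exp_neg_mul_sq (by norm_num) (by linarith [k.cast_nonneg (α := ℝ)])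
    refine (hk.const_mul a).congr (ae_of_all _ fun y => ?_)
    simp only [rpow_natCast, eval_monomial]
    ring_nf

lemma integral_exp_neg_sq_div_two_mul_eval_X_mul_sub_derivative (P : ℝ[X]) :
    ∫ y : ℝ, exp (-y ^ 2 / 2) * (X * P - derivative P).eval y = 0 := by
  refine integral_eq_zero_of_hasDerivAt_of_integrable
    (f := fun y => -(exp (-y ^ 2 / 2) * P.eval y)) (fun y => ?_)
    (integrable_exp_neg_sq_div_two_mul_eval _) (integrable_exp_neg_sq_div_two_mul_eval P).neg
  have hexp : HasDerivAt (fun y : ℝ => exp (-y ^ 2 / 2)) (exp (-y ^ 2 / 2) * -y) y :=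
    (((hasDerivAt_pow 2 y).neg.div_const 2).congr_deriv (by ring)).exp
  refine ((hexp.mul (P.hasDerivAt y)).neg).congr_deriv ?_
  simp only [eval_sub, eval_mul, eval_X]
  ring

lemma X_mul_sub_derivative_comp_X_add_C {R : Type*} [CommRing R] (p : R[X]) (a : R) :
    (X * p - derivative p).comp (X + C a) =
      C a * p.comp (X + C a) + (X * p.comp (X + C a) - derivative (p.comp (X + C a))) := by
  rw [derivative_comp, derivative_X_add_C, one_mul, sub_comp, mul_comp, X_comp]
  ring

theorem integral_exp_neg_sq_div_two_mul_eval_hermite_comp_X_add_C (n : ℕ) (x : ℝ) :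
    ∫ y : ℝ, exp (-y ^ 2 / 2) * (((hermite n).map (algebraMap ℤ ℝ)).comp (X + C x)).eval y =
      √(2 * π) * x ^ n := by
  induction n with
  | zero =>
    have hgauss : ∫ y : ℝ, exp (-(1 / 2) * y ^ 2) = √(2 * π) := by
      rw [integral_gaussian]
      ring_nf
    rw [pow_zero, mul_one, ← hgauss]
    congr with y
    simp [hermite_zero, div_eq_inv_mul]
  | succ n ih =>
    set q := ((hermite n).map (algebraMap ℤ ℝ)).comp (X + C x)
    have hrec : ((hermite (n + 1)).map (algebraMap ℤ ℝ)).comp (X + C x) =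
        C x * q + (X * q - derivative q) := by
      rw [hermite_succ, Polynomial.map_sub, Polynomial.map_mul, map_X, ← derivative_map,
        X_mul_sub_derivative_comp_X_add_C]
    simp_rw [hrec, eval_add, eval_C_mul, mul_add, ← mul_assoc, mul_comm _ x, mul_assoc]
    rw [integral_add ((integrable_exp_neg_sq_div_two_mul_eval q).const_mul x)
        (integrable_exp_neg_sq_div_two_mul_eval _), integral_const_mul, ih,
      integral_exp_neg_sq_div_two_mul_eval_X_mul_sub_derivative]
    ring

/-- Gaussian average of a shifted Hermite polynomial is a monomial. -/
theorem hermite_gaussian_shift (n : ℕ) (x : ℝ) :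
    ∫ y : ℝ, Real.exp (-y ^ 2 / 2) * He n (x + y) =
      Real.sqrt (2 * Real.pi) * x ^ n := by
  have hshift : ∀ y, He n (x + y) =
      (((hermite n).map (algebraMap ℤ ℝ)).comp (X + C x)).eval y := fun y => by
    rw [He, eval_comp, eval_map_algebraMap, eval_add, eval_X, eval_C, add_comm]
  simp_rw [hshift]
  exact integral_exp_neg_sq_div_two_mul_eval_hermite_comp_X_add_C n x
end

section
/- For every natural number n and every real x, x^n = n! · Σ_{0 ≤ m ≤ n/2} (1 / (2^m · m! · (n-2m)!)) · He_{n-2m}(x). -/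
/-!
Induction on the recurrence `He_{k+1} = x He_k - He_k'` gives `He_k' = k He_{k-1}`, hence
`x He_k = He_{k+1} + k He_{k-1}`. Multiplying the expansion of `x^n` by `x` with this rule and
collecting terms, the coefficient `c(n, m) = n! / (2^m m! (n-2m)!) = C(n, 2m) (2m-1)‼` (the number
of `m`-edge matchings on `n` points) must satisfy `c(n+1, m+1) = c(n, m+1) + (n-2m) c(n, m)`, which
is Pascal's rule combined with `C(n, 2m+1) (2m+1) = C(n, 2m) (n-2m)`. Since `c(n, m) = 0` for
`2m > n`, the expansion holds with the sum over any range `m < N` with `n < 2N`, which removes the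
parity case split from the induction.
-/

open Nat

open Polynomial

namespace Polynomial

theorem derivative_hermite_succ (n : ℕ) :
    derivative (hermite (n + 1)) = (n + 1 : ℤ[X]) * hermite n := by
  induction n with
  | zero => simp
  | succ n ih =>
    rw [hermite_succ (n + 1), derivative_sub, derivative_mul, derivative_X, ih, derivative_mul,
      hermite_succ n]
    simp only [derivative_add, derivative_natCast, derivative_one]
    push_cast
    ring

theorem X_mul_hermite (k : ℕ) :
    X * hermite k = hermite (k + 1) + (k : ℤ[X]) * hermite (k - 1) := by
  cases k with
  | zero => simp
  | succ k => rw [hermite_succ (k + 1), derivative_hermite_succ]; push_cast; ring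

end Polynomial

/-- For `m = 0` the factor is `(0 - 1)‼ = 0‼ = 1`. -/
def matchingCount (n m : ℕ) : ℕ := n.choose (2 * m) * (2 * m - 1)‼

theorem matchingCount_zero_right (n : ℕ) : matchingCount n 0 = 1 := by
  simp [matchingCount]

theorem matchingCount_eq_zero {n m : ℕ} (h : n < 2 * m) : matchingCount n m = 0 := by
  simp [matchingCount, Nat.choose_eq_zero_of_lt h]

theorem matchingCount_succ_succ (n m : ℕ) :
    matchingCount (n + 1) (m + 1) =
      matchingCount n (m + 1) + (n - 2 * m) * matchingCount n m := by
  have hodd : (2 * m + 1)‼ = (2 * m + 1) * (2 * m - 1)‼ := doubleFactorial_add_one (2 * m)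
  have hchoose := Nat.choose_succ_right_eq n (2 * m)
  calc matchingCount (n + 1) (m + 1) = (n + 1).choose (2 * m + 1 + 1) * (2 * m + 1)‼ := rfl
    _ = n.choose (2 * m + 2) * (2 * m + 1)‼
          + n.choose (2 * m + 1) * (2 * m + 1) * (2 * m - 1)‼ := by
        rw [Nat.choose_succ_succ', hodd]; ring
    _ = matchingCount n (m + 1) + (n - 2 * m) * matchingCount n m := by
        rw [hchoose, matchingCount, matchingCount, mul_add, mul_one,
          show 2 * m + 2 - 1 = 2 * m + 1 by omega]
        ring

theorem doubleFactorial_two_mul_sub_one_mul (m : ℕ) :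
    (2 * m - 1)‼ * (2 ^ m * m !) = (2 * m)! := by
  cases m with
  | zero => rfl
  | succ m =>
    rw [← doubleFactorial_two_mul, show 2 * (m + 1) = 2 * m + 1 + 1 by ring,
      factorial_eq_mul_doubleFactorial, Nat.add_sub_cancel, mul_comm]

theorem matchingCount_mul {n m : ℕ} (h : 2 * m ≤ n) :
    matchingCount n m * (2 ^ m * m ! * (n - 2 * m)!) = n ! := by
  rw [matchingCount, ← Nat.choose_mul_factorial_mul_factorial h,
    ← doubleFactorial_two_mul_sub_one_mul]
  ring

theorem X_mul_matchingCount_mul_hermite (n m : ℕ) :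
    X * ((matchingCount n m : ℤ[X]) * hermite (n - 2 * m)) =
      (matchingCount n m : ℤ[X]) * hermite (n + 1 - 2 * m) +
        ((n - 2 * m : ℕ) : ℤ[X]) * (matchingCount n m : ℤ[X]) *
          hermite (n + 1 - 2 * (m + 1)) := by
  rcases le_or_gt (2 * m) n with h | h
  · rw [mul_left_comm, X_mul_hermite, show n - 2 * m + 1 = n + 1 - 2 * m by omega,
      show n - 2 * m - 1 = n + 1 - 2 * (m + 1) by omega]
    ring
  · simp [matchingCount_eq_zero h]

theorem X_pow_eq_sum_hermite (n : ℕ) {N : ℕ} (hN : n < 2 * N) :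
    (X ^ n : ℤ[X]) =
      ∑ m ∈ Finset.range N, (matchingCount n m : ℤ[X]) * hermite (n - 2 * m) := by
  induction n generalizing N with
  | zero =>
    obtain ⟨M, rfl⟩ : ∃ M, N = M + 1 := Nat.exists_eq_succ_of_ne_zero (by omega)
    simp [Finset.sum_range_succ', matchingCount_zero_right, matchingCount_eq_zero]
  | succ n ih =>
    obtain ⟨M, rfl⟩ : ∃ M, N = M + 1 := Nat.exists_eq_succ_of_ne_zero (by omega)
    have htop : n - 2 * M = 0 := by omega
    rw [_root_.pow_succ', ih (N := M + 1) (by omega), Finset.mul_sum]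
    simp only [X_mul_matchingCount_mul_hermite, Finset.sum_add_distrib]
    rw [Finset.sum_range_succ', Finset.sum_range_succ, Finset.sum_range_succ' _ M, htop]
    simp only [matchingCount_succ_succ, matchingCount_zero_right]
    push_cast
    simp only [Finset.sum_add_distrib, add_mul]
    ring

/-- Expansion of the monomial `x^n` in probabilist's Hermite polynomials. -/
theorem monomial_hermite_expansion (n : ℕ) (x : ℝ) :
    x ^ n = (n ! : ℝ) * ∑ m ∈ Finset.range (n / 2 + 1),
      (1 / ((2 : ℝ) ^ m * (m ! : ℝ) * ((n - 2 * m)! : ℝ))) * He (n - 2 * m) x := by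
  have hpoly := congrArg (aeval x) (X_pow_eq_sum_hermite n (N := n / 2 + 1) (by omega))
  simp only [map_pow, aeval_X, map_sum, map_mul, map_natCast] at hpoly
  rw [hpoly, Finset.mul_sum]
  refine Finset.sum_congr rfl fun m hm => ?_
  have hcount : (matchingCount n m : ℝ) * (2 ^ m * m ! * (n - 2 * m)!) = n ! := by
    exact_mod_cast matchingCount_mul (by rw [Finset.mem_range] at hm; omega)
  rw [He, ← hcount]
  field_simp
end
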